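/- Let p(q) = Σ_{l=0}^{k} q^{n_l} a_{n_l} be a lacunary quaternionic polynomial with exponents 0 = n_0 < n_1 < ⋯ < n_k = n, coefficients of the form a_{n_l} = α_{n_l} + β_{n_l} i (real and i-parts only, β_{n_l} arbitrary real numbers) with a_{n_k} ≠ 0, no two adjacent coefficients equal (a_{n_l} ≠ a_{n_{l+1}} for l = 0, …, k−1), and suppose α_{n_0} ≤ α_{n_1} ≤ ⋯ ≤ α_{n_k}. For j = 1, …, k set M_{n_j} := sup_{|q|=1} ‖q^{n_j} a_{n_j} − q^{n_{j−1}+1} a_{n_{j−1}}‖ / ‖a_{n_j} − a_{n_{j−1}}‖ and M := max_{1 ≤ j ≤ k} M_{n_j}. Then every zero q ∈ ℍ of p satisfies |q| ≤ (M / |a_{n_k}|) { (α_{n_k} − α_{n_0} + |α_{n_0}|) + 2 Σ_{j=0}^{k−1} |β_{n_j}| + |β_{n_k}| }. -/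

import Mathlib

open Real Finset
open Quaternion
noncomputable def phi (I : Quaternion ℝ) (z : ℂ) : Quaternion ℝ := (z.re : Quaternion ℝ) + z.im • I

lemma phi_mul (I : Quaternion ℝ) (hIre : I.re = 0)
    (h1 : I.imI^2 + I.imJ^2 + I.imK^2 = 1) (z w : ℂ) :
    phi I (z*w) = phi I z * phi I w := by
  ext
  · simp [phi, hIre, Complex.mul_re, Complex.mul_im]
    linear_combination (z.im*w.im) * h1
  · simp [phi, hIre, Complex.mul_re, Complex.mul_im]; ring
  · simp [phi, hIre, Complex.mul_re, Complex.mul_im]; ring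
  · simp [phi, hIre, Complex.mul_re, Complex.mul_im]; ring

lemma phi_one (I : Quaternion ℝ) : phi I 1 = 1 := by simp [phi]

lemma phi_neg_one (I : Quaternion ℝ) : phi I (-1) = -1 := by simp [phi]

lemma phi_real (I : Quaternion ℝ) (t : ℝ) : phi I (t : ℂ) = (t : Quaternion ℝ) := by simp [phi]

lemma phi_pow (I : Quaternion ℝ) (hIre : I.re = 0)
    (h1 : I.imI^2 + I.imJ^2 + I.imK^2 = 1) (z : ℂ) (n : ℕ) :
    phi I (z ^ n) = (phi I z) ^ n := by
  induction n with
  | zero => simpa using phi_one I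
  | succ n ih => rw [pow_succ, pow_succ, phi_mul I hIre h1, ih]

lemma phi_norm (I : Quaternion ℝ) (hIre : I.re = 0)
    (h1 : I.imI^2 + I.imJ^2 + I.imK^2 = 1) (z : ℂ) :
    ‖phi I z‖ = ‖z‖ := by
  have h2 : normSq (phi I z) = z.re^2 + z.im^2 := by
    simp [phi, normSq_def', hIre]
    linear_combination (z.im^2) * h1
  have h3 := normSq_eq_norm_mul_self (phi I z)
  have h4 : ‖z‖ * ‖z‖ = z.re^2 + z.im^2 := by
    have := Complex.sq_norm z
    rw [Complex.normSq_apply] at this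
    nlinarith []
  nlinarith [norm_nonneg (phi I z), norm_nonneg z]

lemma phi_inv (I : Quaternion ℝ) (hIre : I.re = 0)
    (h1 : I.imI^2 + I.imJ^2 + I.imK^2 = 1) (z : ℂ) (hz : z ≠ 0) :
    phi I z⁻¹ = (phi I z)⁻¹ := by
  have h2 : phi I z⁻¹ * phi I z = 1 := by
    rw [← phi_mul I hIre h1, inv_mul_cancel₀ hz, phi_one]
  exact eq_inv_of_mul_eq_one_left h2

/-- Existence of a slice decomposition for any quaternion. -/
lemma exists_slice (q : Quaternion ℝ) :
    ∃ (I : Quaternion ℝ) (z : ℂ), I.re = 0 ∧ I.imI^2 + I.imJ^2 + I.imK^2 = 1 ∧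
      phi I z = q := by
  by_cases him : q.im = 0
  · refine ⟨show Quaternion ℝ from ⟨0,1,0,0⟩, (q.re : ℂ), rfl, by norm_num, ?_⟩
    rw [phi_real]
    conv_rhs => rw [← q.re_add_im]
    rw [him, add_zero]
  · have hn : ‖q.im‖ ≠ 0 := norm_ne_zero_iff.2 him
    refine ⟨‖q.im‖⁻¹ • q.im, ⟨q.re, ‖q.im‖⟩, by simp, ?_, ?_⟩
    · have h2 : normSq (‖q.im‖⁻¹ • q.im) = 1 := by
        have h3 := normSq_eq_norm_mul_self (‖q.im‖⁻¹ • q.im)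
        rw [norm_smul] at h3
        simp at h3
        rw [h3]
        field_simp
      have hre : (‖q.im‖⁻¹ • q.im).re = 0 := by simp
      rw [normSq_def'] at h2
      rw [hre] at h2
      linarith [h2]
    · show (q.re : Quaternion ℝ) + ‖q.im‖ • (‖q.im‖⁻¹ • q.im) = q
      rw [smul_smul, mul_inv_cancel₀ hn, one_smul, q.re_add_im]

lemma pow_eq_one_aux {x : ℝ} (hx : 0 ≤ x) {d : ℕ} (hd : d ≠ 0) (h : x ^ d = 1) : x = 1 := by
  rcases lt_trichotomy x 1 with h1 | h1 | h1
  · have := pow_lt_one₀ hx h1 hd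
    rw [h] at this; linarith
  · exact h1
  · have := one_lt_pow₀ h1 hd
    rw [h] at this; linarith

lemma exists_unit_root (v : ℂ) (hv : ‖v‖ = 1) (d : ℕ) (hd : d ≠ 0) :
    ∃ w : ℂ, w ^ d = v ∧ ‖w‖ = 1 := by
  obtain ⟨w, hw⟩ := IsAlgClosed.exists_pow_nat_eq v (Nat.pos_of_ne_zero hd)
  refine ⟨w, hw, ?_⟩
  have : (‖w‖) ^ d = 1 := by rw [← norm_pow, hw, hv]
  exact pow_eq_one_aux (norm_nonneg w) hd this

/-- Key growth lemma. -/
lemma key_lemma (a b : Quaternion ℝ) (m s : ℕ) (hsm : s ≤ m) (C : ℝ)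
    (hC : ∀ u : Quaternion ℝ, ‖u‖ = 1 → ‖u ^ m * a - u ^ s * b‖ ≤ C)
    (q : Quaternion ℝ) (hq : 1 ≤ ‖q‖) :
    ‖q ^ m * a - q ^ s * b‖ ≤ ‖q‖ ^ m * C := by
  obtain ⟨I, z, hIre, h1, hphiz⟩ := exists_slice q
  have hqz : ‖q‖ = ‖z‖ := by rw [← hphiz, phi_norm I hIre h1]
  have hz1 : 1 ≤ ‖z‖ := hqz ▸ hq
  have hz0 : z ≠ 0 := by
    intro h; rw [h] at hz1; simp at hz1; linarith
  set d := m - s with hdDef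
  by_cases hd : d = 0
  · have hms : m = s := by omega
    subst hms
    have : q ^ m * a - q ^ m * b = q ^ m * (a - b) := (mul_sub _ _ _).symm
    rw [this, norm_mul, norm_pow]
    have hab : ‖a - b‖ ≤ C := by
      have := hC 1 (by simp)
      simpa using this
    exact mul_le_mul_of_nonneg_left hab (by positivity)
  · -- circle bound
    have hcirc : ∀ w : ℂ, ‖w‖ = 1 → ‖a - phi I (w ^ d) * b‖ ≤ C := by
      intro w hw
      have hw0 : w ≠ 0 := by
        intro h; rw [h] at hw; simp at hw
      set u := phi I w⁻¹ with hu_def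
      have hu : ‖u‖ = 1 := by rw [hu_def, phi_norm I hIre h1, norm_inv, hw]; norm_num
      have hmul : u ^ m * phi I (w ^ d) = u ^ s := by
        rw [hu_def, ← phi_pow I hIre h1, ← phi_mul I hIre h1, ← phi_pow I hIre h1]
        congr 1
        rw [inv_pow, inv_pow]
        field_simp
        rw [← pow_add]
        congr 1
        omega
      have hid : u ^ m * a - u ^ s * b = u ^ m * (a - phi I (w ^ d) * b) := by
        rw [mul_sub, ← mul_assoc, hmul]
      calc ‖a - phi I (w^d) * b‖ = ‖u ^ m * (a - phi I (w^d) * b)‖ := by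
            rw [norm_mul, norm_pow, hu, one_pow, one_mul]
        _ = ‖u ^ m * a - u ^ s * b‖ := by rw [hid]
        _ ≤ C := hC u hu
    have haC : ‖a‖ ≤ C := by
      obtain ⟨w₂, hw₂, hw₂a⟩ := exists_unit_root (-1) (by simp) d hd
      have e1 : ‖a - b‖ ≤ C := by
        have := hcirc 1 (by simp)
        rw [one_pow, phi_one] at this
        simpa using this
      have e2 : ‖a + b‖ ≤ C := by
        have := hcirc w₂ hw₂a
        rw [hw₂, phi_neg_one] at this
        simpa [sub_neg_eq_add] using this
      have h3 := norm_add_le (a - b) (a + b)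
      have h4 : (a - b) + (a + b) = (2:ℝ) • a := by module
      rw [h4, norm_smul] at h3
      simp at h3
      linarith
    set v : ℂ := (z⁻¹) ^ d with hv_def
    set t := ‖v‖ with ht_def
    have ht1 : t ≤ 1 := by
      rw [ht_def, hv_def, norm_pow, norm_inv]
      apply pow_le_one₀ (by positivity)
      rw [inv_le_one_iff₀]; right; exact hz1
    have ht0 : 0 < t := by
      have hvne : v ≠ 0 := by
        rw [hv_def]; exact pow_ne_zero _ (inv_ne_zero hz0)
      exact norm_pos_iff.2 hvne
    set v₁ : ℂ := (t : ℂ)⁻¹ * v with hv₁_def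
    have hv₁ : ‖v₁‖ = 1 := by
      rw [hv₁_def, norm_mul, norm_inv, Complex.norm_real, Real.norm_eq_abs, abs_of_pos ht0, ← ht_def]
      field_simp
    obtain ⟨w₁, hw₁, hw₁a⟩ := exists_unit_root v₁ hv₁ d hd
    have hX : ‖a - phi I v * b‖ ≤ C := by
      have hsplit : a - phi I v * b = (1 - t) • a + t • (a - phi I v₁ * b) := by
        have hveq : v = (t : ℂ) * v₁ := by
          rw [hv₁_def, ← mul_assoc, mul_inv_cancel₀ (by exact_mod_cast ht0.ne'), one_mul]
        rw [hveq, phi_mul I hIre h1, phi_real, Quaternion.coe_mul_eq_smul]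
        rw [smul_mul_assoc]
        module
      rw [hsplit]
      have hcv₁ : ‖a - phi I v₁ * b‖ ≤ C := by
        have := hcirc w₁ hw₁a
        rw [hw₁] at this
        exact this
      calc ‖(1 - t) • a + t • (a - phi I v₁ * b)‖
          ≤ ‖(1 - t) • a‖ + ‖t • (a - phi I v₁ * b)‖ := norm_add_le _ _
        _ = (1 - t) * ‖a‖ + t * ‖a - phi I v₁ * b‖ := by
            rw [norm_smul, norm_smul, Real.norm_eq_abs, Real.norm_eq_abs,
              abs_of_nonneg (by linarith), abs_of_nonneg (by linarith)]
        _ ≤ (1 - t) * C + t * C := by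
            apply add_le_add
            · exact mul_le_mul_of_nonneg_left haC (by linarith)
            · exact mul_le_mul_of_nonneg_left hcv₁ (by linarith)
        _ = C := by ring
    have hiden : q ^ m * a - q ^ s * b = q ^ m * (a - phi I v * b) := by
      have hmul : q ^ m * phi I v = q ^ s := by
        rw [← hphiz, hv_def, ← phi_pow I hIre h1 z m, ← phi_mul I hIre h1,
          ← phi_pow I hIre h1 z s]
        congr 1
        rw [inv_pow]
        field_simp
        rw [← pow_add]
        congr 1
        omega
      rw [mul_sub, ← mul_assoc, hmul]
    rw [hiden, norm_mul, norm_pow]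
    exact mul_le_mul_of_nonneg_left hX (by positivity)

noncomputable def myI : Quaternion ℝ := ⟨0,1,0,0⟩

lemma myI_norm : ‖myI‖ = 1 := by
  have h : normSq myI = 1 := by rw [normSq_def']; simp [myI]
  have h2 := normSq_eq_norm_mul_self myI
  rw [h] at h2
  nlinarith [norm_nonneg myI]

lemma two_comp_norm (x : Quaternion ℝ) (hj : x.imJ = 0) (hk : x.imK = 0) :
    ‖x‖ ≤ |x.re| + |x.imI| := by
  have hx : x = (x.re : Quaternion ℝ) + x.imI • myI := by
    ext <;> simp [hj, hk] <;> simp [myI]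
  calc ‖x‖ = ‖(x.re : Quaternion ℝ) + x.imI • myI‖ := by rw [← hx]
    _ ≤ ‖(x.re : Quaternion ℝ)‖ + ‖x.imI • myI‖ := norm_add_le _ _
    _ = |x.re| + |x.imI| := by
        rw [Quaternion.norm_coe, norm_smul, myI_norm, mul_one, Real.norm_eq_abs,
          Real.norm_eq_abs]


/-- Quaternionic Eneström–Kakeya-type theorem for lacunary polynomials whose
coefficients `a l = α_l + β_l i` have only real and `i`-parts, with `α` monotone
increasing and `β` arbitrary. -/
theorem stmt_3 (k : ℕ) (N : ℕ → ℕ) (a : ℕ → Quaternion ℝ)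
    (hN0 : N 0 = 0) (hNmono : ∀ l, l < k → N l < N (l + 1))
    (hJ : ∀ l, l ≤ k → (a l).imJ = 0) (hK : ∀ l, l ≤ k → (a l).imK = 0)
    (hak : a k ≠ 0)
    (hadj : ∀ l, l < k → a l ≠ a (l + 1))
    (hα : ∀ l, l < k → (a l).re ≤ (a (l + 1)).re)
    (Mj : ℕ → ℝ)
    (hMj : ∀ j, 1 ≤ j → j ≤ k →
      Mj j = ⨆ q : {q : Quaternion ℝ // ‖q‖ = 1},
        ‖(q : Quaternion ℝ) ^ (N j) * a j -
          (q : Quaternion ℝ) ^ (N (j - 1) + 1) * a (j - 1)‖ / ‖a j - a (j - 1)‖)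
    (M : ℝ) (hM : M = ⨆ j ∈ Finset.Icc 1 k, Mj j)
    (q : Quaternion ℝ) (hq : ∑ l ∈ Finset.range (k + 1), q ^ (N l) * a l = 0) :
    ‖q‖ ≤ (M / ‖a k‖) * (((a k).re - (a 0).re + |(a 0).re|) +
      2 * (∑ j ∈ Finset.range k, |(a j).imI|) + |(a k).imI|) := by
  by_cases hk : k = 0
  · subst hk
    rw [Finset.sum_range_one, hN0, pow_zero, one_mul] at hq
    exact absurd hq hak
  have hk1 : 1 ≤ k := Nat.one_le_iff_ne_zero.2 hk
  set B : ℝ := ((a k).re - (a 0).re + |(a 0).re|) +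
      2 * (∑ j ∈ Finset.range k, |(a j).imI|) + |(a k).imI| with hB
  have hakpos : 0 < ‖a k‖ := norm_pos_iff.2 hak
  -- monotonicity of N
  have hNle : ∀ i j, i ≤ j → j ≤ k → N i ≤ N j := by
    intro i j hij hjk
    induction j with
    | zero =>
      have : i = 0 := by omega
      subst this; exact le_rfl
    | succ n ih =>
      rcases Nat.lt_or_ge i (n+1) with h | h
      · have h1 : i ≤ n := by omega
        have h2 : n ≤ k := by omega
        exact le_trans (ih h1 h2) (le_of_lt (hNmono n (by omega)))
      · have : i = n + 1 := by omega
        subst this; rfl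
  -- monotonicity of α
  have hαle : ∀ i j, i ≤ j → j ≤ k → (a i).re ≤ (a j).re := by
    intro i j hij hjk
    induction j with
    | zero =>
      have : i = 0 := by omega
      subst this; exact le_rfl
    | succ n ih =>
      rcases Nat.lt_or_ge i (n+1) with h | h
      · exact le_trans (ih (by omega) (by omega)) (hα n (by omega))
      · have : i = n + 1 := by omega
        subst this; rfl
  -- facts about Mj
  have hDpos : ∀ j, j < k → 0 < ‖a (j+1) - a j‖ := by
    intro j hj
    rw [norm_pos_iff, sub_ne_zero]
    exact (hadj j hj).symm
  have hMjfact : ∀ j, j < k →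
      (1 ≤ Mj (j+1) ∧ ∀ u : Quaternion ℝ, ‖u‖ = 1 →
        ‖u ^ (N (j+1)) * a (j+1) - u ^ (N j + 1) * a j‖ ≤ Mj (j+1) * ‖a (j+1) - a j‖) := by
    intro j hj
    have hD := hDpos j hj
    have hMjeq := hMj (j+1) (by omega) (by omega)
    simp only [Nat.add_sub_cancel] at hMjeq
    have hbdd : BddAbove (Set.range fun u : {q : Quaternion ℝ // ‖q‖ = 1} =>
        ‖(u : Quaternion ℝ) ^ (N (j+1)) * a (j+1) -
          (u : Quaternion ℝ) ^ (N j + 1) * a j‖ / ‖a (j+1) - a j‖) := by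
      refine ⟨(‖a (j+1)‖ + ‖a j‖) / ‖a (j+1) - a j‖, ?_⟩
      rintro x ⟨u, rfl⟩
      have hnum : ‖(u : Quaternion ℝ) ^ (N (j+1)) * a (j+1) -
          (u : Quaternion ℝ) ^ (N j + 1) * a j‖ ≤ ‖a (j+1)‖ + ‖a j‖ := by
        refine (norm_sub_le _ _).trans ?_
        rw [norm_mul, norm_mul, norm_pow, norm_pow, u.2, one_pow, one_pow, one_mul, one_mul]
      exact (div_le_div_iff_of_pos_right hD).mpr hnum
    constructor
    · rw [hMjeq]
      refine le_ciSup_of_le hbdd ⟨1, by simp⟩ ?_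
      simp only [one_pow, one_mul]
      rw [div_self hD.ne']
    · intro u hu
      have hle : ‖u ^ (N (j+1)) * a (j+1) - u ^ (N j + 1) * a j‖ / ‖a (j+1) - a j‖
          ≤ Mj (j+1) := by
        rw [hMjeq]
        exact le_ciSup hbdd (⟨u, hu⟩ : {q : Quaternion ℝ // ‖q‖ = 1})
      calc ‖u ^ (N (j+1)) * a (j+1) - u ^ (N j + 1) * a j‖
          = (‖u ^ (N (j+1)) * a (j+1) - u ^ (N j + 1) * a j‖ / ‖a (j+1) - a j‖) *
            ‖a (j+1) - a j‖ := by field_simp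
        _ ≤ Mj (j+1) * ‖a (j+1) - a j‖ := mul_le_mul_of_nonneg_right hle (norm_nonneg _)
  -- facts about M
  have hMbdd : BddAbove (Set.range fun j : ℕ => ⨆ _ : j ∈ Finset.Icc 1 k, Mj j) := by
    refine ⟨(Finset.Icc 1 k).sup' ⟨1, by simp [hk1]⟩ Mj ⊔ 0, ?_⟩
    rintro x ⟨j, rfl⟩
    dsimp only
    by_cases hj : j ∈ Finset.Icc 1 k
    · rw [ciSup_pos hj]
      exact le_sup_of_le_left (Finset.le_sup' Mj hj)
    · simp only [hj]
      rw [Real.iSup_of_isEmpty]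
      exact le_sup_right
  have hMj_le_M : ∀ j, j < k → Mj (j+1) ≤ M := by
    intro j hj
    rw [hM]
    refine le_ciSup_of_le hMbdd (j+1) ?_
    have hmem : j + 1 ∈ Finset.Icc 1 k := by simp; omega
    rw [ciSup_pos hmem]
  have hM1 : 1 ≤ M := le_trans (hMjfact 0 (by omega)).1 (hMj_le_M 0 (by omega))
  have hM0 : 0 ≤ M := by linarith
  -- bound on norm of a k from below via B
  have hα0k : (a 0).re ≤ (a k).re := hαle 0 k (by omega) le_rfl
  have hsums0 : 0 ≤ ∑ j ∈ Finset.range k, |(a j).imI| :=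
    Finset.sum_nonneg fun j _ => abs_nonneg _
  have hakB : ‖a k‖ ≤ B := by
    have h5 : |(a k).re| ≤ (a k).re - (a 0).re + |(a 0).re| := by
      rcases abs_cases (a k).re with ⟨h, _⟩ | ⟨h, _⟩ <;>
        rcases abs_cases (a 0).re with ⟨h', _⟩ | ⟨h', _⟩ <;> linarith
    have h6 := two_comp_norm (a k) (hJ k le_rfl) (hK k le_rfl)
    rw [hB]
    linarith
  have hB0 : 0 < B := lt_of_lt_of_le hakpos hakB
  rcases le_or_gt ‖q‖ 1 with hr | hr
  · -- small q case
    calc ‖q‖ ≤ 1 := hr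
      _ ≤ (M / ‖a k‖) * B := by
        rw [div_mul_eq_mul_div, le_div_iff₀ hakpos, one_mul]
        nlinarith
  · -- large q case
    have hq1 : 1 ≤ ‖q‖ := hr.le
    -- telescoping identity
    have htel : q ^ (N k + 1) * a k =
        a 0 + ∑ j ∈ Finset.range k, (q ^ (N (j+1)) * a (j+1) - q ^ (N j + 1) * a j) := by
      have e1 : ∑ j ∈ Finset.range k, q ^ (N (j+1)) * a (j+1)
          = (∑ l ∈ Finset.range (k+1), q ^ (N l) * a l) - q ^ (N 0) * a 0 := by
        rw [Finset.sum_range_succ' (fun l => q ^ (N l) * a l) k]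
        rw [add_sub_cancel_right]
      have e2 : ∑ j ∈ Finset.range k, q ^ (N j + 1) * a j
          = q * ∑ j ∈ Finset.range k, q ^ (N j) * a j := by
        rw [Finset.mul_sum]
        refine Finset.sum_congr rfl fun j _ => ?_
        rw [pow_succ', mul_assoc]
      have e3 : ∑ j ∈ Finset.range k, q ^ (N j) * a j = -(q ^ (N k) * a k) := by
        have e4 := Finset.sum_range_succ (fun l => q ^ (N l) * a l) k
        rw [hq] at e4
        simpa using eq_neg_of_add_eq_zero_left e4.symm
      rw [Finset.sum_sub_distrib, e1, e2, e3, hq, hN0, pow_zero, one_mul]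
      rw [pow_succ', mul_assoc]
      noncomm_ring
    -- estimate each term
    have hterm : ∀ j ∈ Finset.range k,
        ‖q ^ (N (j+1)) * a (j+1) - q ^ (N j + 1) * a j‖
          ≤ ‖q‖ ^ (N k) * (M * ‖a (j+1) - a j‖) := by
      intro j hj
      rw [Finset.mem_range] at hj
      obtain ⟨hMjge, hMjC⟩ := hMjfact j hj
      have hkey := key_lemma (a (j+1)) (a j) (N (j+1)) (N j + 1)
        (hNmono j hj) (Mj (j+1) * ‖a (j+1) - a j‖) hMjC q hq1
      refine hkey.trans ?_
      have h1 : ‖q‖ ^ (N (j+1)) ≤ ‖q‖ ^ (N k) :=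
        pow_le_pow_right₀ hq1 (hNle (j+1) k (by omega) le_rfl)
      have h2 : Mj (j+1) * ‖a (j+1) - a j‖ ≤ M * ‖a (j+1) - a j‖ :=
        mul_le_mul_of_nonneg_right (hMj_le_M j hj) (norm_nonneg _)
      have h3 : 0 ≤ Mj (j+1) * ‖a (j+1) - a j‖ :=
        mul_nonneg (by linarith) (norm_nonneg _)
      exact mul_le_mul h1 h2 h3 (by positivity)
    -- sum the estimates
    have hsum : ‖q‖ ^ (N k + 1) * ‖a k‖
        ≤ ‖a 0‖ + ‖q‖ ^ (N k) * (M * ∑ j ∈ Finset.range k, ‖a (j+1) - a j‖) := by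
      have h1 : ‖q ^ (N k + 1) * a k‖
          ≤ ‖a 0‖ + ∑ j ∈ Finset.range k, ‖q‖ ^ (N k) * (M * ‖a (j+1) - a j‖) := by
        rw [htel]
        refine (norm_add_le _ _).trans ?_
        gcongr
        exact (norm_sum_le _ _).trans (Finset.sum_le_sum hterm)
      rw [norm_mul, norm_pow] at h1
      refine h1.trans ?_
      rw [← Finset.mul_sum, ← Finset.mul_sum]
    set S := ∑ j ∈ Finset.range k, ‖a (j+1) - a j‖ with hS
    -- bound S
    have hdiff : ∀ j ∈ Finset.range k, ‖a (j+1) - a j‖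
        ≤ ((a (j+1)).re - (a j).re) + (|(a (j+1)).imI| + |(a j).imI|) := by
      intro j hj
      rw [Finset.mem_range] at hj
      have h1 := two_comp_norm (a (j+1) - a j) (by simp [hJ (j+1) (by omega), hJ j (by omega)])
        (by simp [hK (j+1) (by omega), hK j (by omega)])
      have h2 : |(a (j+1) - a j).re| = (a (j+1)).re - (a j).re := by
        have : (a (j+1) - a j).re = (a (j+1)).re - (a j).re := by simp
        rw [this]
        exact abs_of_nonneg (sub_nonneg.2 (hα j hj))
      have h3 : |(a (j+1) - a j).imI| ≤ |(a (j+1)).imI| + |(a j).imI| := by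
        have : (a (j+1) - a j).imI = (a (j+1)).imI - (a j).imI := by simp
        rw [this]
        exact abs_sub _ _
      linarith
    have hSle : S ≤ ((a k).re - (a 0).re) +
        (2 * ∑ j ∈ Finset.range k, |(a j).imI| + |(a k).imI| - |(a 0).imI|) := by
      have h1 : S ≤ ∑ j ∈ Finset.range k,
          (((a (j+1)).re - (a j).re) + (|(a (j+1)).imI| + |(a j).imI|)) :=
        Finset.sum_le_sum hdiff
      have h2 : ∑ j ∈ Finset.range k, ((a (j+1)).re - (a j).re) = (a k).re - (a 0).re :=
        Finset.sum_range_sub (fun j => (a j).re) k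
      have h3 : ∑ j ∈ Finset.range k, |(a (j+1)).imI|
          = ∑ j ∈ Finset.range k, |(a j).imI| + |(a k).imI| - |(a 0).imI| := by
        have h4 := Finset.sum_range_succ' (fun j => |(a j).imI|) k
        have h5 := Finset.sum_range_succ (fun j => |(a j).imI|) k
        linarith
      have h6 : ∑ j ∈ Finset.range k,
          (((a (j+1)).re - (a j).re) + (|(a (j+1)).imI| + |(a j).imI|))
          = ((a k).re - (a 0).re) + ((∑ j ∈ Finset.range k, |(a j).imI| + |(a k).imI|
              - |(a 0).imI|) + ∑ j ∈ Finset.range k, |(a j).imI|) := by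
        rw [Finset.sum_add_distrib, Finset.sum_add_distrib, h2, h3]
      linarith
    have ha0 : ‖a 0‖ ≤ |(a 0).re| + |(a 0).imI| :=
      two_comp_norm _ (hJ 0 (by omega)) (hK 0 (by omega))
    have hS0 : 0 ≤ S := Finset.sum_nonneg fun j _ => norm_nonneg _
    have hSB : ‖a 0‖ + M * S ≤ M * B := by
      have h7 : M * S ≤ M * (((a k).re - (a 0).re) +
          (2 * ∑ j ∈ Finset.range k, |(a j).imI| + |(a k).imI| - |(a 0).imI|)) :=
        mul_le_mul_of_nonneg_left hSle hM0
      have h8 : ‖a 0‖ ≤ M * (|(a 0).re| + |(a 0).imI|) :=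
        ha0.trans (le_mul_of_one_le_left (by positivity) hM1)
      have h9 : M * B = M * (((a k).re - (a 0).re) +
          (2 * ∑ j ∈ Finset.range k, |(a j).imI| + |(a k).imI| - |(a 0).imI|))
          + M * (|(a 0).re| + |(a 0).imI|) := by
        rw [hB]; ring
      linarith
    have hpow1 : 1 ≤ ‖q‖ ^ (N k) := one_le_pow₀ hq1
    have hfin : ‖q‖ * ‖a k‖ ≤ M * B := by
      have h10 : ‖q‖ ^ (N k) * (‖q‖ * ‖a k‖) ≤ ‖q‖ ^ (N k) * (M * B) := by
        calc ‖q‖ ^ (N k) * (‖q‖ * ‖a k‖) = ‖q‖ ^ (N k + 1) * ‖a k‖ := by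
              rw [pow_succ]; ring
          _ ≤ ‖a 0‖ + ‖q‖ ^ (N k) * (M * S) := hsum
          _ ≤ ‖q‖ ^ (N k) * ‖a 0‖ + ‖q‖ ^ (N k) * (M * S) := by
              have := le_mul_of_one_le_left (norm_nonneg (a 0)) hpow1
              linarith
          _ = ‖q‖ ^ (N k) * (‖a 0‖ + M * S) := by ring
          _ ≤ ‖q‖ ^ (N k) * (M * B) := mul_le_mul_of_nonneg_left hSB (by positivity)
      exact le_of_mul_le_mul_left h10 (by positivity)
    rw [div_mul_eq_mul_div, le_div_iff₀ hakpos]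
    exact hfin
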